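/- arXiv:1901.11366 — 5 statements merged into one kernel-verified Lean document; each statement's English description precedes it below -/
import Mathlib

section
/- Fix integers n ≥ 1 and P ≥ 1. For each i ∈ {1,…,n}, let R⁽ⁱ⁾ be a real symmetric P×P matrix with all diagonal entries equal to 1, and suppose there exists a subset K⁽ⁱ⁾ ⊆ {1,…,P} with k⁽ⁱ⁾ = |K⁽ⁱ⁾| such that for p ≠ q the off-diagonal entry R⁽ⁱ⁾_{pq} is strictly positive if p, q ∈ K⁽ⁱ⁾ and equal to 0 otherwise, all off-diagonal entries are at most 1, and whenever k⁽ⁱ⁾ ≥ 4 every nonzero off-diagonal entry of R⁽ⁱ⁾ is strictly greater than ((k⁽ⁱ⁾−1)/k⁽ⁱ⁾)². Let C = Q · blkdiag(R⁽¹⁾,…,R⁽ⁿ⁾) · Qᵀ for some orthogonal matrix Q ∈ ℝ^{nP×nP}. Then the number of eigenvalues of C that are strictly greater than 1, counted with algebraic multiplicity, is exactly equal to the number of indices i with k⁽ⁱ⁾ ≥ 2 (i.e., the number of components exhibiting nonzero correlation). -/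
/-!
`C` is orthogonally similar to `blockDiagonal R`, so the eigenvalues of `C`, read off as the roots
of its characteristic polynomial, are those of the blocks `R i` taken together. It remains to show
that a block has exactly one eigenvalue `> 1` if `#K ≥ 2` and none otherwise. If `#K < 2` the block
is the identity. If `#K ≥ 2` it is not, yet its trace is `P`, so some eigenvalue exceeds `1`; and
its quadratic form is bounded by `x ⬝ x + (w ⬝ x)²` for some `w`, which leaves room for only one
eigenvalue `> 1`: a combination of two such eigenvectors orthogonal to `w` would violate the bound.
For `#K = 3` one can take `w` with `R p q = w p * w q` off the diagonal; for `#K = 2` and `#K ≥ 4`,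
`w` is the indicator of `K`, which works once all correlations in `K` are at least
`1 - 2 / #K ≤ ((#K - 1) / #K)²`.
-/

open Matrix Finset

lemma Multiset.countP_bind {α β : Type*} (P : β → Prop) [DecidablePred P] (s : Multiset α)
    (f : α → Multiset β) : (s.bind f).countP P = (s.map fun a => (f a).countP P).sum := by
  rw [Multiset.bind, Multiset.join, ← Multiset.coe_countPAddMonoidHom, map_multiset_sum,
    Multiset.map_map]
  rfl

lemma Finset.sum_sum_erase_mul_self {m R : Type*} [DecidableEq m] [CommRing R] (s : Finset m)
    (f : m → R) : ∑ p ∈ s, ∑ q ∈ s.erase p, f p * f q = (∑ p ∈ s, f p) ^ 2 - ∑ p ∈ s, f p ^ 2 := by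
  rw [sq, Finset.sum_mul_sum, ← Finset.sum_sub_distrib]
  refine Finset.sum_congr rfl fun p hp => ?_
  rw [Finset.sum_erase_eq_sub hp, sq]

lemma mul_le_one_sub_mul_add_mul_abs {a c : ℝ} (hlo : 1 - 2 * c ≤ a) (hhi : a ≤ 1) (t : ℝ) :
    a * t ≤ (1 - c) * t + c * |t| := by
  rcases le_or_gt 0 t with ht | ht
  · rw [abs_of_nonneg ht]; nlinarith
  · rw [abs_of_neg ht]; nlinarith

lemma Finset.sum_sum_erase_mul_le_sq_sum {m : Type*} [DecidableEq m] (K : Finset m)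
    (a : m → m → ℝ) (x : m → ℝ)
    (hlo : ∀ p ∈ K, ∀ q ∈ K, p ≠ q → 1 - 2 / #K ≤ a p q)
    (hhi : ∀ p ∈ K, ∀ q ∈ K, p ≠ q → a p q ≤ 1) :
    ∑ p ∈ K, ∑ q ∈ K.erase p, a p q * (x p * x q) ≤ (∑ p ∈ K, x p) ^ 2 := by
  -- With `c = 1 / #K`, each term `a p q * t` is at most `(1 - c) * t + c * |t|`, and the `|t|`
  -- part is then absorbed by Cauchy–Schwarz `(∑ |x p|)² ≤ #K * ∑ x p ²`.
  set c : ℝ := (#K : ℝ)⁻¹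
  have hc : 0 ≤ c := by positivity
  have hcK : c * #K ≤ 1 := by
    rcases eq_or_ne (#K : ℝ) 0 with h | h
    · simp [h]
    · simp [c, h]
  have hpair : ∀ p ∈ K, ∀ q ∈ K.erase p,
      a p q * (x p * x q) ≤ (1 - c) * (x p * x q) + c * (|x p| * |x q|) := by
    intro p hp q hq
    obtain ⟨hqp, hqK⟩ := mem_erase.mp hq
    rw [← abs_mul]
    refine mul_le_one_sub_mul_add_mul_abs ?_ (hhi p hp q hqK hqp.symm) _
    simpa [c, div_eq_mul_inv] using hlo p hp q hqK hqp.symm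
  have hCS : (∑ p ∈ K, |x p|) ^ 2 ≤ #K * ∑ p ∈ K, x p ^ 2 := by
    simpa using sq_sum_le_card_mul_sum_sq (s := K) (f := fun p => |x p|)
  calc ∑ p ∈ K, ∑ q ∈ K.erase p, a p q * (x p * x q)
      ≤ ∑ p ∈ K, ∑ q ∈ K.erase p, ((1 - c) * (x p * x q) + c * (|x p| * |x q|)) :=
        sum_le_sum fun p hp => sum_le_sum fun q hq => hpair p hp q hq
    _ = (1 - c) * ((∑ p ∈ K, x p) ^ 2 - ∑ p ∈ K, x p ^ 2)
          + c * ((∑ p ∈ K, |x p|) ^ 2 - ∑ p ∈ K, x p ^ 2) := by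
        have habs := sum_sum_erase_mul_self K fun p => |x p|
        simp only [sq_abs] at habs
        rw [← habs, ← sum_sum_erase_mul_self]
        simp only [mul_sum, ← sum_add_distrib]
    _ ≤ (∑ p ∈ K, x p) ^ 2 := by
        have hW : 0 ≤ ∑ p ∈ K, x p ^ 2 := sum_nonneg fun p _ => sq_nonneg _
        nlinarith [mul_le_mul_of_nonneg_left hCS hc, mul_le_mul_of_nonneg_right hcK hW,
          mul_nonneg hc (sq_nonneg (∑ p ∈ K, x p))]

lemma exists_mul_eq_mul_eq_mul_eq {x y z : ℝ} (hx : 0 < x) (hy : 0 < y) (hz : 0 < z) :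
    ∃ α β γ : ℝ, α * β = x ∧ α * γ = y ∧ β * γ = z := by
  set α := √(x * y / z)
  have hα : α ≠ 0 := (Real.sqrt_pos.mpr (by positivity)).ne'
  have hα2 : α ^ 2 = x * y / z := Real.sq_sqrt (by positivity)
  refine ⟨α, x / α, y / α, by field_simp, by field_simp, ?_⟩
  rw [div_mul_div_comm, ← sq, hα2]
  field_simp

lemma OrthonormalBasis.ofLp_dotProduct_ofLp {m : Type*} [Fintype m] [DecidableEq m]
    (b : OrthonormalBasis m ℝ (EuclideanSpace ℝ m)) (i j : m) :
    (b i).ofLp ⬝ᵥ (b j).ofLp = if i = j then 1 else 0 := by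
  simpa [EuclideanSpace.inner_eq_star_dotProduct, eq_comm] using b.inner_eq_ite j i

namespace Matrix

lemma charmatrix_blockDiagonal {R o m : Type*} [CommRing R] [Fintype o] [DecidableEq o]
    [Fintype m] [DecidableEq m] (M : o → Matrix m m R) :
    charmatrix (blockDiagonal M) = blockDiagonal fun i => charmatrix (M i) := by
  ext ⟨p, i⟩ ⟨q, j⟩
  rcases eq_or_ne i j with rfl | hij
  · rcases eq_or_ne p q with rfl | hpq
    · simp
    · simp [hpq]
  · simp [blockDiagonal_apply, hij]

lemma charpoly_blockDiagonal {R o m : Type*} [CommRing R] [Fintype o] [DecidableEq o]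
    [Fintype m] [DecidableEq m] (M : o → Matrix m m R) :
    (blockDiagonal M).charpoly = ∏ i, (M i).charpoly := by
  rw [charpoly, charmatrix_blockDiagonal, det_blockDiagonal]
  rfl

lemma exists_offDiag_eq_mul_of_card_eq_three {m : Type*} [DecidableEq m] {A : Matrix m m ℝ}
    {K : Finset m} (hA : A.IsSymm)
    (hpos : ∀ p q, p ≠ q → p ∈ K → q ∈ K → 0 < A p q)
    (hzero : ∀ p q, p ≠ q → (p ∉ K ∨ q ∉ K) → A p q = 0) (hK : #K = 3) :
    ∃ w : m → ℝ, ∀ p q, p ≠ q → A p q = w p * w q := by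
  obtain ⟨a, b, c, hab, hac, hbc, rfl⟩ := card_eq_three.mp hK
  obtain ⟨α, β, γ, hαβ, hαγ, hβγ⟩ := exists_mul_eq_mul_eq_mul_eq
    (hpos a b hab (by simp) (by simp)) (hpos a c hac (by simp) (by simp))
    (hpos b c hbc (by simp) (by simp))
  refine ⟨fun p => if p = a then α else if p = b then β else if p = c then γ else 0, ?_⟩
  intro p q hpq
  by_cases hp : p ∈ ({a, b, c} : Finset m)
  · by_cases hq : q ∈ ({a, b, c} : Finset m)
    · simp only [mem_insert, mem_singleton] at hp hq
      rcases hp with rfl | rfl | rfl <;> rcases hq with rfl | rfl | rfl <;>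
        simp_all [hA.apply, hab.symm, hac.symm, hbc.symm, mul_comm]
    · simp_all
  · simp_all

variable {m : Type*} [Fintype m] [DecidableEq m]

lemma IsHermitian.card_filter_eigenvalues_eq_countP_roots {A : Matrix m m ℝ} (hA : A.IsHermitian)
    (P : ℝ → Prop) [DecidablePred P] :
    #{j | P (hA.eigenvalues j)} = A.charpoly.roots.countP P := by
  simp [hA.roots_charpoly_eq_eigenvalues, Multiset.countP_map, Finset.card, Finset.filter_val]

lemma IsHermitian.eigenvalues_one (h : (1 : Matrix m m ℝ).IsHermitian) (j : m) :
    h.eigenvalues j = 1 := by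
  simp [h.eigenvalues_eq, h.eigenvectorBasis.ofLp_dotProduct_ofLp]

lemma IsHermitian.eq_one_of_eigenvalues_eq_one {A : Matrix m m ℝ} (hA : A.IsHermitian)
    (h : ∀ j, hA.eigenvalues j = 1) : A = 1 := by
  rw [hA.spectral_theorem, show hA.eigenvalues = 1 from funext h]
  simp

lemma IsHermitian.exists_one_lt_eigenvalues {A : Matrix m m ℝ} (hA : A.IsHermitian)
    (hdiag : ∀ p, A p p = 1) (hA1 : A ≠ 1) : ∃ j, 1 < hA.eigenvalues j := by
  by_contra! h
  refine hA1 (hA.eq_one_of_eigenvalues_eq_one fun j => ?_)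
  have hsum : ∑ j, hA.eigenvalues j = ∑ _j : m, 1 := by
    simpa [trace, hdiag] using hA.trace_eq_sum_eigenvalues.symm
  exact (sum_eq_sum_iff_of_le fun j _ => h j).mp hsum j (mem_univ j)

lemma IsHermitian.card_filter_one_lt_eigenvalues_le_one {A : Matrix m m ℝ} (hA : A.IsHermitian)
    (w : m → ℝ) (hle : ∀ x, x ⬝ᵥ A *ᵥ x ≤ x ⬝ᵥ x + (w ⬝ᵥ x) ^ 2) :
    #{j | 1 < hA.eigenvalues j} ≤ 1 := by
  refine card_le_one.mpr fun a ha b hb => by_contra fun hab => ?_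
  simp only [mem_filter, mem_univ, true_and] at ha hb
  set u : m → ℝ := (hA.eigenvectorBasis a).ofLp
  set v : m → ℝ := (hA.eigenvectorBasis b).ofLp
  obtain ⟨c, d, hw, hcd⟩ : ∃ c d : ℝ, c * (w ⬝ᵥ u) + d * (w ⬝ᵥ v) = 0 ∧ (c ≠ 0 ∨ d ≠ 0) := by
    by_cases hwu : w ⬝ᵥ u = 0
    · exact ⟨1, 0, by simp [hwu], by simp⟩
    · exact ⟨-(w ⬝ᵥ v), w ⬝ᵥ u, by ring, .inr hwu⟩
  have hdot := hA.eigenvectorBasis.ofLp_dotProduct_ofLp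
  have hxx : (c • u + d • v) ⬝ᵥ (c • u + d • v) = c ^ 2 + d ^ 2 := by
    simp [u, v, hdot, hab, Ne.symm hab]; ring
  have hxAx : (c • u + d • v) ⬝ᵥ A *ᵥ (c • u + d • v)
      = c ^ 2 * hA.eigenvalues a + d ^ 2 * hA.eigenvalues b := by
    simp [u, v, mulVec_add, mulVec_smul, hA.mulVec_eigenvectorBasis, hdot, hab, Ne.symm hab]
    ring
  have hwx : w ⬝ᵥ (c • u + d • v) = 0 := by simpa [dotProduct_add] using hw
  have := hle (c • u + d • v)
  rw [hxx, hxAx, hwx] at this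
  rcases hcd with hc | hd
  · nlinarith [sq_pos_of_ne_zero hc, sq_nonneg d]
  · nlinarith [sq_pos_of_ne_zero hd, sq_nonneg c]

lemma dotProduct_mulVec_eq_add_sum_sum_erase {A : Matrix m m ℝ} {K : Finset m}
    (hdiag : ∀ p, A p p = 1) (hzero : ∀ p q, p ≠ q → (p ∉ K ∨ q ∉ K) → A p q = 0) (x : m → ℝ) :
    x ⬝ᵥ A *ᵥ x = x ⬝ᵥ x + ∑ p ∈ K, ∑ q ∈ K.erase p, A p q * (x p * x q) := by
  have hE : ∀ p q, p ∉ K ∨ q ∉ K.erase p → (A - 1) p q = 0 := by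
    intro p q h
    rcases eq_or_ne p q with rfl | hpq
    · simp [hdiag]
    · have : p ∉ K ∨ q ∉ K := by simpa [hpq.symm] using h
      simp [hzero p q hpq this, hpq]
  have hsplit : x ⬝ᵥ A *ᵥ x = x ⬝ᵥ x + x ⬝ᵥ (A - 1) *ᵥ x := by
    rw [sub_mulVec, one_mulVec, dotProduct_sub]; ring
  rw [hsplit, add_right_inj]
  simp only [dotProduct, mulVec, mul_sum]
  rw [← sum_subset (subset_univ K) fun p _ hp => sum_eq_zero fun q _ => by simp [hE p q (.inl hp)]]
  refine sum_congr rfl fun p _ => ?_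
  rw [← sum_subset (subset_univ (K.erase p)) fun q _ hq => by simp [hE p q (.inr hq)]]
  refine sum_congr rfl fun q hq => ?_
  rw [sub_apply, one_apply_ne (ne_of_mem_erase hq).symm, sub_zero]
  ring

lemma dotProduct_mulVec_le_of_offDiag_eq_mul {A : Matrix m m ℝ} {w : m → ℝ}
    (hdiag : ∀ p, A p p = 1) (hoff : ∀ p q, p ≠ q → A p q = w p * w q) (x : m → ℝ) :
    x ⬝ᵥ A *ᵥ x ≤ x ⬝ᵥ x + (w ⬝ᵥ x) ^ 2 := by
  have hA : A = 1 + vecMulVec w w - diagonal fun p => w p ^ 2 := by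
    ext p q
    rcases eq_or_ne p q with rfl | hpq
    · simp [hdiag, vecMulVec_apply, sq]
    · simp [hoff p q hpq, hpq, vecMulVec_apply]
  have hdiag_nonneg : 0 ≤ x ⬝ᵥ (diagonal fun p => w p ^ 2) *ᵥ x := by
    simp only [dotProduct, mulVec_diagonal]
    exact sum_nonneg fun p _ => by nlinarith [sq_nonneg (w p * x p)]
  rw [hA, sub_mulVec, add_mulVec, one_mulVec, vecMulVec_mulVec, dotProduct_sub, dotProduct_add]
  rw [op_smul_eq_smul, dotProduct_smul, smul_eq_mul, dotProduct_comm x w]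
  nlinarith

lemma dotProduct_mulVec_le_add_sq_indicator {A : Matrix m m ℝ} {K : Finset m}
    (hdiag : ∀ p, A p p = 1) (hzero : ∀ p q, p ≠ q → (p ∉ K ∨ q ∉ K) → A p q = 0)
    (hlo : ∀ p ∈ K, ∀ q ∈ K, p ≠ q → 1 - 2 / #K ≤ A p q)
    (hhi : ∀ p ∈ K, ∀ q ∈ K, p ≠ q → A p q ≤ 1) (x : m → ℝ) :
    x ⬝ᵥ A *ᵥ x ≤ x ⬝ᵥ x + ((fun p => if p ∈ K then 1 else 0) ⬝ᵥ x) ^ 2 := by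
  have hw : (fun p => if p ∈ K then 1 else 0) ⬝ᵥ x = ∑ p ∈ K, x p := by
    simp [dotProduct, ite_mul, sum_ite_mem]
  rw [dotProduct_mulVec_eq_add_sum_sum_erase hdiag hzero, hw, add_le_add_iff_left]
  exact sum_sum_erase_mul_le_sq_sum K A x hlo hhi

lemma exists_dotProduct_mulVec_le_add_sq {A : Matrix m m ℝ} {K : Finset m} (hA : A.IsSymm)
    (hdiag : ∀ p, A p p = 1) (hpos : ∀ p q, p ≠ q → p ∈ K → q ∈ K → 0 < A p q)
    (hzero : ∀ p q, p ≠ q → (p ∉ K ∨ q ∉ K) → A p q = 0) (hle : ∀ p q, p ≠ q → A p q ≤ 1)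
    (hthr : 4 ≤ #K → ∀ p q, p ≠ q → A p q ≠ 0 → (((#K : ℝ) - 1) / #K) ^ 2 < A p q) :
    ∃ w : m → ℝ, ∀ x, x ⬝ᵥ A *ᵥ x ≤ x ⬝ᵥ x + (w ⬝ᵥ x) ^ 2 := by
  by_cases hK3 : #K = 3
  · obtain ⟨w, hw⟩ := exists_offDiag_eq_mul_of_card_eq_three hA hpos hzero hK3
    exact ⟨w, dotProduct_mulVec_le_of_offDiag_eq_mul hdiag hw⟩
  refine ⟨_, dotProduct_mulVec_le_add_sq_indicator hdiag hzero ?_ fun p _ q _ => hle p q⟩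
  intro p hp q hq hpq
  have hApq := hpos p q hpq hp hq
  have hK2 : 2 ≤ #K := one_lt_card.mpr ⟨p, hp, q, hq, hpq⟩
  rcases show #K = 2 ∨ 4 ≤ #K by omega with hK | hK
  · rw [hK]; norm_num; exact hApq.le
  · have hκ : (#K : ℝ) ≠ 0 := by positivity
    have hsq : (((#K : ℝ) - 1) / #K) ^ 2 = 1 - 2 / #K + ((#K : ℝ)⁻¹) ^ 2 := by
      field_simp; ring
    nlinarith [hthr hK p q hpq hApq.ne', sq_nonneg ((#K : ℝ)⁻¹)]

lemma IsHermitian.card_filter_one_lt_eigenvalues_eq {A : Matrix m m ℝ} {K : Finset m}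
    (hA : A.IsHermitian) (hdiag : ∀ p, A p p = 1)
    (hpos : ∀ p q, p ≠ q → p ∈ K → q ∈ K → 0 < A p q)
    (hzero : ∀ p q, p ≠ q → (p ∉ K ∨ q ∉ K) → A p q = 0) (hle : ∀ p q, p ≠ q → A p q ≤ 1)
    (hthr : 4 ≤ #K → ∀ p q, p ≠ q → A p q ≠ 0 → (((#K : ℝ) - 1) / #K) ^ 2 < A p q) :
    #{j | 1 < hA.eigenvalues j} = if 2 ≤ #K then 1 else 0 := by
  split_ifs with hK
  · obtain ⟨p, hp, q, hq, hpq⟩ := one_lt_card.mp hK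
    have hA1 : A ≠ 1 := fun h => (hpos p q hpq hp hq).ne' (by simp [h, hpq])
    obtain ⟨j, hj⟩ := hA.exists_one_lt_eigenvalues hdiag hA1
    obtain ⟨w, hw⟩ := exists_dotProduct_mulVec_le_add_sq (isHermitian_iff_isSymm.mp hA) hdiag
      hpos hzero hle hthr
    exact le_antisymm (hA.card_filter_one_lt_eigenvalues_le_one w hw)
      (card_pos.mpr ⟨j, by simpa using hj⟩)
  · have hA1 : A = 1 := by
      ext p q
      rcases eq_or_ne p q with rfl | hpq
      · simp [hdiag]
      · refine (hzero p q hpq ?_).trans (one_apply_ne hpq).symm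
        by_contra! h
        exact hK (one_lt_card.mpr ⟨p, h.1, q, h.2, hpq⟩)
    subst hA1
    simp [hA.eigenvalues_one]

end Matrix

theorem eigenvalues_gt_one_card_eq_correlated_components_general
    (n P : ℕ)
    (R : Fin n → Matrix (Fin P) (Fin P) ℝ)
    (K : Fin n → Finset (Fin P))
    (hsym : ∀ i, (R i).IsHermitian)
    (hdiag : ∀ i p, R i p p = 1)
    (hposK : ∀ i p q, p ≠ q → p ∈ K i → q ∈ K i → 0 < R i p q)
    (hzero : ∀ i p q, p ≠ q → (p ∉ K i ∨ q ∉ K i) → R i p q = 0)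
    (hle : ∀ i p q, p ≠ q → R i p q ≤ 1)
    (hthr : ∀ i, 4 ≤ (K i).card → ∀ p q, p ≠ q → R i p q ≠ 0 →
      ((((K i).card : ℝ) - 1) / ((K i).card : ℝ)) ^ 2 < R i p q)
    (Q : Matrix (Fin P × Fin n) (Fin P × Fin n) ℝ)
    (hQ2 : Qᵀ * Q = 1)
    (C : Matrix (Fin P × Fin n) (Fin P × Fin n) ℝ)
    (hCdef : C = Q * Matrix.blockDiagonal R * Qᵀ)
    (hC : C.IsHermitian) :
    (Finset.univ.filter fun j : Fin P × Fin n => 1 < hC.eigenvalues j).card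
      = (Finset.univ.filter fun i : Fin n => 2 ≤ (K i).card).card := by
  have hchar : C.charpoly = ∏ i, (R i).charpoly := by
    rw [hCdef, mul_assoc, charpoly_mul_comm, mul_assoc, hQ2, mul_one, charpoly_blockDiagonal]
  rw [hC.card_filter_eigenvalues_eq_countP_roots, hchar,
    Polynomial.roots_prod _ _ (prod_ne_zero_iff.mpr fun i _ => (R i).charpoly_monic.ne_zero),
    Multiset.countP_bind, card_filter]
  refine sum_congr rfl fun i _ => ?_
  rw [← (hsym i).card_filter_eigenvalues_eq_countP_roots]
  exact (hsym i).card_filter_one_lt_eigenvalues_eq (hdiag i) (hposK i) (hzero i) (hle i) (hthr i)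

/-- **Theorem 1 (matrix-algebraic content).**
The number of eigenvalues of the composite coherence matrix `C` that are strictly
greater than one (counted with multiplicity) equals the number of signal components
exhibiting nonzero correlation, i.e. the number of indices `i` with `k⁽ⁱ⁾ = |K⁽ⁱ⁾| ≥ 2`. -/
theorem eigenvalues_gt_one_card_eq_correlated_components
    (n P : ℕ) (hn : 1 ≤ n) (hP : 1 ≤ P)
    (R : Fin n → Matrix (Fin P) (Fin P) ℝ)
    (K : Fin n → Finset (Fin P))
    (hsym : ∀ i, (R i).IsHermitian)
    (hdiag : ∀ i p, R i p p = 1)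
    (hposK : ∀ i p q, p ≠ q → p ∈ K i → q ∈ K i → 0 < R i p q)
    (hzero : ∀ i p q, p ≠ q → (p ∉ K i ∨ q ∉ K i) → R i p q = 0)
    (hle : ∀ i p q, p ≠ q → R i p q ≤ 1)
    (hthr : ∀ i, 4 ≤ (K i).card → ∀ p q, p ≠ q → R i p q ≠ 0 →
      ((((K i).card : ℝ) - 1) / ((K i).card : ℝ)) ^ 2 < R i p q)
    (Q : Matrix (Fin P × Fin n) (Fin P × Fin n) ℝ)
    (hQ1 : Q * Qᵀ = 1) (hQ2 : Qᵀ * Q = 1)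
    (C : Matrix (Fin P × Fin n) (Fin P × Fin n) ℝ)
    (hCdef : C = Q * Matrix.blockDiagonal R * Qᵀ)
    (hC : C.IsHermitian) :
    (Finset.univ.filter fun j : Fin P × Fin n => 1 < hC.eigenvalues j).card
      = (Finset.univ.filter fun i : Fin n => 2 ≤ (K i).card).card :=
  eigenvalues_gt_one_card_eq_correlated_components_general n P R K hsym hdiag hposK hzero hle hthr Q
    hQ2 C hCdef hC
end

section
/- Fix integers n ≥ 1 and P ≥ 1, and index ℝ^{nP} by pairs (p,i) with p ∈ {1,…,P} and i ∈ {1,…,n}. For each i let R⁽ⁱ⁾ be a real symmetric P×P matrix with unit diagonal such that for some subset K⁽ⁱ⁾ ⊆ {1,…,P} with k⁽ⁱ⁾ = |K⁽ⁱ⁾|, the off-diagonal entry R⁽ⁱ⁾_{pq} (p ≠ q) is strictly positive when p, q ∈ K⁽ⁱ⁾ and zero otherwise, all off-diagonal entries are at most 1, and whenever k⁽ⁱ⁾ ≥ 4 every nonzero off-diagonal entry exceeds ((k⁽ⁱ⁾−1)/k⁽ⁱ⁾)². Let R̃ = blkdiag(R⁽¹⁾,…,R⁽ⁿ⁾) (indexed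 in component-major order (i,p)), let Π be the nP×nP permutation matrix of the coordinate swap (p,i) ↦ (i,p), and let F = blkdiag(F₁,…,F_P) where each F_p ∈ ℝ^{n×n} is orthogonal. Set C = F Πᵀ R̃ Π Fᵀ. If λ > 1 is an eigenvalue of C with algebraic multiplicity one, then λ is an eigenvalue of exactly one block R⁽ⁱ⁾, and for every eigenvector u of C associated with λ, written as u = (u₁ᵀ,…,u_Pᵀ)ᵀ with u_p ∈ ℝⁿ the subvector of entries indexed by data set p, one has u_p ≠ 0 if and only if p ∈ K⁽ⁱ⁾. -/
open Matrix Finset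

section helpers
open Polynomial


lemma eval_charpoly' {N : Type*} [Fintype N] [DecidableEq N] (M : Matrix N N ℝ) (t : ℝ) :
    M.charpoly.eval t = (t • (1 : Matrix N N ℝ) - M).det := by
  rw [Matrix.charpoly, ← Polynomial.coe_evalRingHom, RingHom.map_det]
  congr 1
  ext i j
  by_cases h : i = j <;>
    simp [Matrix.charmatrix_apply, Matrix.one_apply, h, Matrix.diagonal_apply]

lemma root_iff_eigen {N : Type*} [Fintype N] [DecidableEq N] (M : Matrix N N ℝ) (t : ℝ) :
    M.charpoly.IsRoot t ↔ ∃ v : N → ℝ, v ≠ 0 ∧ M.mulVec v = t • v := by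
  rw [Polynomial.IsRoot, eval_charpoly', ← Matrix.exists_mulVec_eq_zero_iff]
  constructor
  · rintro ⟨v, hv, h⟩
    refine ⟨v, hv, ?_⟩
    have := h
    rw [Matrix.sub_mulVec, Matrix.smul_mulVec, Matrix.one_mulVec, sub_eq_zero] at this
    exact this.symm
  · rintro ⟨v, hv, h⟩
    refine ⟨v, hv, ?_⟩
    rw [Matrix.sub_mulVec, Matrix.smul_mulVec, Matrix.one_mulVec, h, sub_self]

lemma charpoly_similar {N : Type*} [Fintype N] [DecidableEq N]
    (G D : Matrix N N ℝ) (h1 : G * Gᵀ = 1) (h2 : Gᵀ * G = 1) :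
    (G * D * Gᵀ).charpoly = D.charpoly := by
  have hmap : ∀ (A B : Matrix N N ℝ), (A * B).map (C : ℝ → ℝ[X]) =
      A.map (C : ℝ → ℝ[X]) * B.map (C : ℝ → ℝ[X]) := fun A B =>
    Matrix.map_mul (f := (C : ℝ →+* ℝ[X]))
  have hGG : G.map (C : ℝ → ℝ[X]) * Gᵀ.map (C : ℝ → ℝ[X]) = 1 := by
    rw [← hmap, h1, Matrix.map_one _ (map_zero _) (map_one _)]
  have hGG' : Gᵀ.map (C : ℝ → ℝ[X]) * G.map (C : ℝ → ℝ[X]) = 1 := by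
    rw [← hmap, h2, Matrix.map_one _ (map_zero _) (map_one _)]
  have key : charmatrix (G * D * Gᵀ) =
      G.map (C : ℝ → ℝ[X]) * charmatrix D * Gᵀ.map (C : ℝ → ℝ[X]) := by
    have hcomm : G.map (C : ℝ → ℝ[X]) * Matrix.scalar N (X : ℝ[X]) =
        Matrix.scalar N (X : ℝ[X]) * G.map (C : ℝ → ℝ[X]) :=
      (Matrix.scalar_commute (X : ℝ[X]) (fun r => Commute.all _ r) _).symm
    show Matrix.scalar N (X : ℝ[X]) - (C : ℝ →+* ℝ[X]).mapMatrix (G * D * Gᵀ) = _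
    have : (C : ℝ →+* ℝ[X]).mapMatrix (G * D * Gᵀ) =
        G.map (C : ℝ → ℝ[X]) * ((C : ℝ →+* ℝ[X]).mapMatrix D) * Gᵀ.map (C : ℝ → ℝ[X]) := by
      simp only [RingHom.mapMatrix_apply, hmap]
    rw [this]
    show _ = G.map (C : ℝ → ℝ[X]) *
        (Matrix.scalar N (X : ℝ[X]) - (C : ℝ →+* ℝ[X]).mapMatrix D) * Gᵀ.map (C : ℝ → ℝ[X])
    rw [Matrix.mul_sub, Matrix.sub_mul]
    congr 1
    rw [hcomm, Matrix.mul_assoc, hGG, Matrix.mul_one]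
  rw [Matrix.charpoly, key, Matrix.det_mul, Matrix.det_mul, mul_comm, ← mul_assoc,
    ← Matrix.det_mul, hGG', Matrix.det_one, one_mul]
  rfl

lemma charpoly_blockDiagonal {n P : ℕ} (R : Fin n → Matrix (Fin P) (Fin P) ℝ) :
    (Matrix.blockDiagonal R).charpoly = ∏ i, (R i).charpoly := by
  have key : charmatrix (Matrix.blockDiagonal R) =
      Matrix.blockDiagonal (fun i => charmatrix (R i)) := by
    ext ⟨p, i⟩ ⟨q, j⟩
    rcases eq_or_ne i j with rfl | hij
    · rcases eq_or_ne p q with rfl | hpq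
      · simp [Matrix.blockDiagonal_apply, charmatrix_apply_eq]
      · simp [Matrix.blockDiagonal_apply, charmatrix_apply_ne, hpq, Prod.ext_iff,
          charmatrix_apply_ne _ _ _ hpq]
    · have : (p, i) ≠ (q, j) := by simp [Prod.ext_iff, hij]
      simp [Matrix.blockDiagonal_apply, hij, charmatrix_apply_ne _ _ _ this,
        Matrix.blockDiagonal_apply_ne]
  rw [Matrix.charpoly, key, Matrix.det_blockDiagonal]
  rfl

lemma thresh_ineq {kr θ : ℝ} (hkr4 : 4 ≤ kr) (hkey : θ * kr ^ 2 = (kr - 1) ^ 2)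
    (hθ0 : 0 ≤ θ) : (kr - 1) * (1 - θ ^ 2) ≤ (1 + θ) ^ 2 := by
  have hkr0 : (0:ℝ) < kr := by linarith
  have e : (kr - 1) * (1 - θ) * kr ^ 2 = (kr - 1) * kr ^ 2 - (kr - 1) ^ 3 := by
    linear_combination (1 - kr) * hkey
  have f : (1 + θ) * kr ^ 2 = kr ^ 2 + (kr - 1) ^ 2 := by
    linear_combination hkey
  have h1 : (kr - 1) * (1 - θ) * kr ^ 2 ≤ (1 + θ) * kr ^ 2 := by
    rw [e, f]; nlinarith [hkr4]
  have h2 : (kr - 1) * (1 - θ) ≤ 1 + θ :=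
    le_of_mul_le_mul_right h1 (pow_pos hkr0 2)
  nlinarith [mul_le_mul_of_nonneg_right h2 (show (0:ℝ) ≤ 1 + θ by linarith)]

lemma singleton_contra {a b s spT smT θ μ : ℝ} (hμ : 0 < μ) (hs : 0 < s) (hθ0 : 0 ≤ θ)
    (ha0 : 0 ≤ a) (hb0 : 0 ≤ b) (h1 : a ^ 2 ≤ spT) (h2 : b ^ 2 ≤ smT) (hsp : spT + smT = s)
    (hE1 : μ * s ≤ a ^ 2 + b ^ 2 - 2 * θ * (a * b) - s) : False := by
  nlinarith [mul_pos hμ hs, mul_nonneg hθ0 (mul_nonneg ha0 hb0)]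

lemma core_contra {a b s θ m μ : ℝ} (ha : 0 < a) (hb : 0 < b) (hs : 0 < s) (hμ : 0 < μ)
    (hθpos : 0 < θ) (hm3 : 3 ≤ m) (hmθ : m * (1 - θ ^ 2) ≤ (1 + θ) ^ 2)
    (hθab : θ * a ≤ b) (hθba : θ * b ≤ a) (hCS : (a + b) ^ 2 ≤ m * s)
    (hE1 : μ * s ≤ a ^ 2 + b ^ 2 - 2 * θ * (a * b) - s) : False := by
  have hsX : s < a ^ 2 + b ^ 2 - 2 * θ * (a * b) := by
    nlinarith [mul_pos hμ hs]
  have hG1 : (a + b) ^ 2 < m * (a ^ 2 + b ^ 2 - 2 * θ * (a * b)) :=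
    lt_of_le_of_lt hCS (by
      apply mul_lt_mul_of_pos_left hsX
      linarith)
  have hG1' : 0 < θ * (m * (a ^ 2 + b ^ 2) - 2 * θ * m * (a * b) - (a + b) ^ 2) := by
    apply mul_pos hθpos
    nlinarith [hG1]
  have hG2 : 0 ≤ (m - 1) * ((b - θ * a) * (a - θ * b)) := by
    apply mul_nonneg (by linarith)
    exact mul_nonneg (by linarith) (by linarith)
  have hG3 : 0 ≤ (a * b) * ((1 + θ) ^ 2 - m * (1 - θ ^ 2)) := by
    apply mul_nonneg (le_of_lt (mul_pos ha hb))
    linarith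
  nlinarith [hG1', hG2, hG3]

lemma support_eq_K {P : ℕ} (B : Matrix (Fin P) (Fin P) ℝ) (K : Finset (Fin P))
    (hdiag : ∀ p, B p p = 1)
    (hposK : ∀ p q, p ≠ q → p ∈ K → q ∈ K → 0 < B p q)
    (hzero : ∀ p q, p ≠ q → (p ∉ K ∨ q ∉ K) → B p q = 0)
    (hle : ∀ p q, p ≠ q → B p q ≤ 1)
    (hthr : 4 ≤ K.card → ∀ p q, p ≠ q → B p q ≠ 0 →
      (((K.card : ℝ) - 1) / (K.card : ℝ)) ^ 2 < B p q)
    {lam : ℝ} (hlam : 1 < lam)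
    {v : Fin P → ℝ} (hv : v ≠ 0) (heig : B.mulVec v = lam • v) :
    ∀ p, v p ≠ 0 ↔ p ∈ K := by
  have hrow : ∀ p, ∑ q, B p q * v q = lam * v p := by
    intro p
    have := congrFun heig p
    simpa [Matrix.mulVec, dotProduct] using this
  -- entries outside K vanish
  have hout : ∀ p, p ∉ K → v p = 0 := by
    intro p hp
    have hsum : ∑ q, B p q * v q = v p := by
      rw [Finset.sum_eq_single_of_mem p (Finset.mem_univ p)]
      · rw [hdiag, one_mul]
      · intro q _ hq
        rw [hzero p q (Ne.symm hq) (Or.inl hp), zero_mul]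
    have : lam * v p = v p := by rw [← hrow p, hsum]
    have : (lam - 1) * v p = 0 := by ring_nf; linarith [this]
    rcases mul_eq_zero.1 this with h | h
    · exact absurd h (by nlinarith)
    · exact h
  intro p
  constructor
  · intro hvp
    by_contra hp
    exact hvp (hout p hp)
  intro hpK
  by_contra hp0
  -- hp0 : v p = 0
  -- setup
  set T : Finset (Fin P) := K.erase p with hT
  have hpT : p ∉ T := Finset.notMem_erase p K
  have hsupp : ∀ q, q ∉ T → v q = 0 := by
    intro q hq
    rcases eq_or_ne q p with rfl | hqp
    · exact hp0
    · exact hout q (fun hqK => hq (Finset.mem_erase.2 ⟨hqp, hqK⟩))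
  have hTK : ∀ q, q ∈ T → q ∈ K ∧ q ≠ p := fun q hq =>
    ⟨Finset.mem_of_mem_erase hq, Finset.ne_of_mem_erase hq⟩
  set μ : ℝ := lam - 1 with hμdef
  have hμ : 0 < μ := by simp [hμdef]; linarith
  -- reduced eigen equations
  have hrowT : ∀ q ∈ T, μ * v q = ∑ r ∈ T.erase q, B q r * v r := by
    intro q hq
    have h1 : ∑ r, B q r * v r = ∑ r ∈ T, B q r * v r := by
      rw [← Finset.sum_subset (Finset.subset_univ T)]
      intro r _ hr
      rw [hsupp r hr, mul_zero]
    have h2 : ∑ r ∈ T, B q r * v r = (∑ r ∈ T.erase q, B q r * v r) + v q := by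
      rw [← Finset.sum_erase_add T _ hq, hdiag, one_mul]
    have := hrow q
    rw [h1, h2] at this
    simp only [hμdef]
    linarith
  -- constraint from row p
  have hcon : ∑ r ∈ T, B p r * v r = 0 := by
    have h1 : ∑ r, B p r * v r = ∑ r ∈ T, B p r * v r := by
      rw [← Finset.sum_subset (Finset.subset_univ T)]
      intro r _ hr
      rw [hsupp r hr, mul_zero]
    have := hrow p
    rw [h1, hp0, mul_zero] at this
    exact this

  -- positive and negative parts
  set vp : Fin P → ℝ := fun q => max (v q) 0 with hvpdef
  set vm : Fin P → ℝ := fun q => max (-v q) 0 with hvmdef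
  have hvp0 : ∀ q, 0 ≤ vp q := fun q => le_max_right _ _
  have hvm0 : ∀ q, 0 ≤ vm q := fun q => le_max_right _ _
  have hsub : ∀ q, vp q - vm q = v q := fun q => max_zero_sub_max_neg_zero_eq_self (v q)
  have hmul0 : ∀ q, vp q * vm q = 0 := by
    intro q
    rcases le_total (v q) 0 with h | h
    · simp [hvpdef, max_eq_right h]
    · simp [hvmdef, max_eq_right (neg_nonpos.mpr h)]
  have hsq : ∀ q, vp q ^ 2 + vm q ^ 2 = v q ^ 2 := by
    intro q
    have h1 := hsub q
    have h2 := hmul0 q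
    calc vp q ^ 2 + vm q ^ 2 = (vp q - vm q) ^ 2 + 2 * (vp q * vm q) := by ring
    _ = v q ^ 2 := by rw [h1, h2]; ring
  set a : ℝ := ∑ q ∈ T, vp q with hadef
  set b : ℝ := ∑ q ∈ T, vm q with hbdef
  set s : ℝ := ∑ q ∈ T, v q ^ 2 with hsdef
  have ha0 : 0 ≤ a := Finset.sum_nonneg fun q _ => hvp0 q
  have hb0 : 0 ≤ b := Finset.sum_nonneg fun q _ => hvm0 q
  have hs : 0 < s := by
    obtain ⟨q, hq⟩ := Function.ne_iff.mp hv
    have hqT : q ∈ T := by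
      by_contra hqT
      exact hq (hsupp q hqT)
    refine Finset.sum_pos' (fun r _ => sq_nonneg _) ⟨q, hqT, ?_⟩
    exact lt_of_le_of_ne (sq_nonneg _) (Ne.symm (pow_ne_zero 2 hq))
  -- the threshold
  set θ : ℝ := if 4 ≤ K.card then (((K.card : ℝ) - 1) / (K.card : ℝ)) ^ 2 else 0 with hθdef
  have hθ0 : 0 ≤ θ := by
    rw [hθdef]
    split <;> positivity
  have hθB : ∀ q r, q ∈ K → r ∈ K → q ≠ r → θ ≤ B q r := by
    intro q r hq hr hqr
    rw [hθdef]
    split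
    · exact le_of_lt (hthr (by assumption) q r hqr (ne_of_gt (hposK q r hqr hq hr)))
    · exact le_of_lt (hposK q r hqr hq hr)
  -- constraint in terms of parts
  have hconpm : ∑ r ∈ T, B p r * vp r = ∑ r ∈ T, B p r * vm r := by
    have h : ∑ r ∈ T, (B p r * vp r - B p r * vm r) = 0 := by
      rw [← hcon]
      apply Finset.sum_congr rfl
      intro r _
      rw [← hsub r]
      ring
    rw [Finset.sum_sub_distrib] at h
    linarith
  have hBp : ∀ r, r ∈ T → θ ≤ B p r ∧ B p r ≤ 1 ∧ 0 < B p r := by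
    intro r hr
    obtain ⟨hrK, hrp⟩ := hTK r hr
    exact ⟨hθB p r hpK hrK (Ne.symm hrp), hle p r (Ne.symm hrp),
      hposK p r (Ne.symm hrp) hpK hrK⟩
  have hθab : θ * a ≤ b := by
    calc θ * a = ∑ r ∈ T, θ * vp r := by rw [Finset.mul_sum]
    _ ≤ ∑ r ∈ T, B p r * vp r :=
        Finset.sum_le_sum fun r hr => mul_le_mul_of_nonneg_right (hBp r hr).1 (hvp0 r)
    _ = ∑ r ∈ T, B p r * vm r := hconpm
    _ ≤ ∑ r ∈ T, 1 * vm r :=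
        Finset.sum_le_sum fun r hr => mul_le_mul_of_nonneg_right (hBp r hr).2.1 (hvm0 r)
    _ = b := by simp [hbdef]
  have hθba : θ * b ≤ a := by
    calc θ * b = ∑ r ∈ T, θ * vm r := by rw [Finset.mul_sum]
    _ ≤ ∑ r ∈ T, B p r * vm r :=
        Finset.sum_le_sum fun r hr => mul_le_mul_of_nonneg_right (hBp r hr).1 (hvm0 r)
    _ = ∑ r ∈ T, B p r * vp r := hconpm.symm
    _ ≤ ∑ r ∈ T, 1 * vp r :=
        Finset.sum_le_sum fun r hr => mul_le_mul_of_nonneg_right (hBp r hr).2.1 (hvp0 r)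
    _ = a := by simp [hadef]
  -- positivity of a and b
  have hvm_all : a = 0 → ∀ r ∈ T, v r = 0 := by
    intro ha r hr
    rw [hadef] at ha
    have hvp_zero : ∀ r ∈ T, vp r = 0 :=
      (Finset.sum_eq_zero_iff_of_nonneg fun r _ => hvp0 r).mp ha
    have hsum0 : ∑ r ∈ T, B p r * vm r = 0 := by
      rw [← hconpm]
      apply Finset.sum_eq_zero
      intro r hr
      rw [hvp_zero r hr, mul_zero]
    have hvm_zero : ∀ r ∈ T, B p r * vm r = 0 :=
      (Finset.sum_eq_zero_iff_of_nonneg fun r hr =>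
        mul_nonneg (le_of_lt (hBp r hr).2.2) (hvm0 r)).mp hsum0
    have : vm r = 0 := by
      have := hvm_zero r hr
      rcases mul_eq_zero.mp this with h | h
      · exact absurd h (ne_of_gt (hBp r hr).2.2)
      · exact h
    rw [← hsub r, hvp_zero r hr, this, sub_zero]
  have hvp_all : b = 0 → ∀ r ∈ T, v r = 0 := by
    intro hb r hr
    rw [hbdef] at hb
    have hvm_zero : ∀ r ∈ T, vm r = 0 :=
      (Finset.sum_eq_zero_iff_of_nonneg fun r _ => hvm0 r).mp hb
    have hsum0 : ∑ r ∈ T, B p r * vp r = 0 := by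
      rw [hconpm]
      apply Finset.sum_eq_zero
      intro r hr
      rw [hvm_zero r hr, mul_zero]
    have hvp_zero : ∀ r ∈ T, B p r * vp r = 0 :=
      (Finset.sum_eq_zero_iff_of_nonneg fun r hr =>
        mul_nonneg (le_of_lt (hBp r hr).2.2) (hvp0 r)).mp hsum0
    have : vp r = 0 := by
      have := hvp_zero r hr
      rcases mul_eq_zero.mp this with h | h
      · exact absurd h (ne_of_gt (hBp r hr).2.2)
      · exact h
    rw [← hsub r, this, hvm_zero r hr, sub_zero]
  have ha : 0 < a := by
    rcases lt_or_eq_of_le ha0 with h | h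
    · exact h
    · exfalso
      have : s = 0 := Finset.sum_eq_zero fun r hr => by
        rw [hvm_all h.symm r hr]; ring
      linarith
  have hb : 0 < b := by
    rcases lt_or_eq_of_le hb0 with h | h
    · exact h
    · exfalso
      have : s = 0 := Finset.sum_eq_zero fun r hr => by
        rw [hvp_all h.symm r hr]; ring
      linarith

  -- quadratic form identity
  have hQ : μ * s = ∑ q ∈ T, ∑ r ∈ T.erase q, B q r * (v q * v r) := by
    rw [hsdef, Finset.mul_sum]
    apply Finset.sum_congr rfl
    intro q hq
    calc μ * v q ^ 2 = (μ * v q) * v q := by ring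
    _ = (∑ r ∈ T.erase q, B q r * v r) * v q := by rw [hrowT q hq]
    _ = ∑ r ∈ T.erase q, B q r * (v q * v r) := by
        rw [Finset.sum_mul]; exact Finset.sum_congr rfl fun r _ => by ring
  -- termwise estimate
  have hterm : ∀ q ∈ T, ∀ r ∈ T.erase q, B q r * (v q * v r) ≤
      (vp q * vp r + vm q * vm r) - θ * (vp q * vm r + vm q * vp r) := by
    intro q hq r hr
    have hrT := Finset.mem_of_mem_erase hr
    have hrq : r ≠ q := Finset.ne_of_mem_erase hr
    have hθqr : θ ≤ B q r := hθB q r (hTK q hq).1 (hTK r hrT).1 (Ne.symm hrq)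
    have h1 : B q r ≤ 1 := hle q r (Ne.symm hrq)
    have hX : 0 ≤ vp q * vp r + vm q * vm r := by
      have := hvp0 q; have := hvp0 r; have := hvm0 q; have := hvm0 r; positivity
    have hY : 0 ≤ vp q * vm r + vm q * vp r := by
      have := hvp0 q; have := hvp0 r; have := hvm0 q; have := hvm0 r; positivity
    have hid : v q * v r = (vp q * vp r + vm q * vm r) - (vp q * vm r + vm q * vp r) := by
      rw [← hsub q, ← hsub r]; ring
    rw [hid]
    nlinarith [mul_le_mul_of_nonneg_right h1 hX, mul_le_mul_of_nonneg_right hθqr hY]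
  -- the key estimate
  have hE1 : μ * s ≤ a ^ 2 + b ^ 2 - 2 * θ * (a * b) - s := by
    have step1 : μ * s ≤ ∑ q ∈ T, ∑ r ∈ T.erase q,
        ((vp q * vp r + vm q * vm r) - θ * (vp q * vm r + vm q * vp r)) := by
      rw [hQ]
      exact Finset.sum_le_sum fun q hq => Finset.sum_le_sum fun r hr => hterm q hq r hr
    have step2 : ∑ q ∈ T, ∑ r ∈ T.erase q,
        ((vp q * vp r + vm q * vm r) - θ * (vp q * vm r + vm q * vp r))
        = a ^ 2 + b ^ 2 - 2 * θ * (a * b) - s := by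
      have e1 : ∀ q ∈ T, ∑ r ∈ T.erase q,
          ((vp q * vp r + vm q * vm r) - θ * (vp q * vm r + vm q * vp r))
          = (vp q * a + vm q * b - θ * (vp q * b + vm q * a)) -
            (vp q ^ 2 + vm q ^ 2) := by
        intro q hq
        rw [Finset.sum_erase_eq_sub hq]
        have e2 : ∑ r ∈ T, ((vp q * vp r + vm q * vm r) - θ * (vp q * vm r + vm q * vp r))
            = vp q * a + vm q * b - θ * (vp q * b + vm q * a) := by
          rw [hadef, hbdef]
          simp only [Finset.sum_sub_distrib, Finset.sum_add_distrib, ← Finset.mul_sum]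
        rw [e2]
        linear_combination (2 * θ) * hmul0 q
      rw [Finset.sum_congr rfl e1, Finset.sum_sub_distrib]
      have e3 : ∑ q ∈ T, (vp q ^ 2 + vm q ^ 2) = s := by
        rw [hsdef]
        exact Finset.sum_congr rfl fun q _ => hsq q
      rw [e3]
      have e4 : ∑ q ∈ T, (vp q * a + vm q * b - θ * (vp q * b + vm q * a))
          = a ^ 2 + b ^ 2 - 2 * θ * (a * b) := by
        simp only [Finset.sum_sub_distrib, Finset.sum_add_distrib, ← Finset.sum_mul,
          ← Finset.mul_sum]
        rw [← hadef, ← hbdef]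
        ring
      rw [e4]
    linarith [step1, step2.le, step2.ge]
  -- sign classes
  set T1 : Finset (Fin P) := T.filter (fun q => 0 < v q) with hT1def
  set T2 : Finset (Fin P) := T.filter (fun q => v q < 0) with hT2def
  have haT1 : a = ∑ q ∈ T1, vp q := by
    rw [hadef, hT1def]
    refine (Finset.sum_filter_of_ne ?_).symm
    intro q _ hq
    rcases le_or_gt (v q) 0 with h | h
    · exact absurd (by simp [hvpdef, max_eq_right h]) hq
    · exact h
  have hbT2 : b = ∑ q ∈ T2, vm q := by
    rw [hbdef, hT2def]
    refine (Finset.sum_filter_of_ne ?_).symm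
    intro q _ hq
    rcases le_or_gt 0 (v q) with h | h
    · exact absurd (by simp [hvmdef, max_eq_right (neg_nonpos.mpr h)]) hq
    · exact h
  have hT1ne : T1.Nonempty := by
    rw [Finset.nonempty_iff_ne_empty]
    intro h
    rw [haT1, h, Finset.sum_empty] at ha
    exact lt_irrefl 0 ha
  have hT2ne : T2.Nonempty := by
    rw [Finset.nonempty_iff_ne_empty]
    intro h
    rw [hbT2, h, Finset.sum_empty] at hb
    exact lt_irrefl 0 hb
  have hsp : ∑ q ∈ T, vp q ^ 2 + ∑ q ∈ T, vm q ^ 2 = s := by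
    rw [hsdef, ← Finset.sum_add_distrib]
    exact Finset.sum_congr rfl fun q _ => hsq q
  by_cases hcase : T1.card = 1 ∧ T2.card = 1
  · -- both sign classes singletons
    have hCS1 : a ^ 2 ≤ ∑ q ∈ T1, vp q ^ 2 := by
      have := sq_sum_le_card_mul_sum_sq (s := T1) (f := fun q => vp q)
      rw [hcase.1] at this
      rw [haT1]
      simpa using this
    have hCS2 : b ^ 2 ≤ ∑ q ∈ T2, vm q ^ 2 := by
      have := sq_sum_le_card_mul_sum_sq (s := T2) (f := fun q => vm q)
      rw [hcase.2] at this
      rw [hbT2]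
      simpa using this
    have hsub1 : ∑ q ∈ T1, vp q ^ 2 ≤ ∑ q ∈ T, vp q ^ 2 :=
      Finset.sum_le_sum_of_subset_of_nonneg (Finset.filter_subset _ _)
        fun q _ _ => sq_nonneg _
    have hsub2 : ∑ q ∈ T2, vm q ^ 2 ≤ ∑ q ∈ T, vm q ^ 2 :=
      Finset.sum_le_sum_of_subset_of_nonneg (Finset.filter_subset _ _)
        fun q _ _ => sq_nonneg _
    exact singleton_contra hμ hs hθ0 ha0 hb0 (le_trans hCS1 hsub1) (le_trans hCS2 hsub2)
      hsp hE1
  · -- at least three nonzero entries: the threshold case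
    have hdisj : Disjoint T1 T2 := by
      rw [Finset.disjoint_left]
      intro q hq1 hq2
      rw [hT1def, Finset.mem_filter] at hq1
      rw [hT2def, Finset.mem_filter] at hq2
      exact absurd hq1.2 (not_lt.mpr hq2.2.le)
    have hcard12 : T1.card + T2.card ≤ T.card := by
      rw [← Finset.card_union_of_disjoint hdisj]
      exact Finset.card_le_card (Finset.union_subset (Finset.filter_subset _ _)
        (Finset.filter_subset _ _))
    have h1le : 1 ≤ T1.card := Finset.one_le_card.mpr hT1ne
    have h2le : 1 ≤ T2.card := Finset.one_le_card.mpr hT2ne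
    have hT3 : 3 ≤ T.card := by
      rcases Nat.lt_or_ge T1.card 2 with h1 | h1
      · rcases Nat.lt_or_ge T2.card 2 with h2 | h2
        · exact absurd ⟨by omega, by omega⟩ hcase
        · omega
      · omega
    have hKT : T.card + 1 = K.card := Finset.card_erase_add_one hpK
    have hK4 : 4 ≤ K.card := by omega
    have hθval : θ = (((K.card : ℝ) - 1) / (K.card : ℝ)) ^ 2 := by
      rw [hθdef, if_pos hK4]
    set kr : ℝ := (K.card : ℝ) with hkrdef
    have hkr4 : (4 : ℝ) ≤ kr := by
      rw [hkrdef]; exact_mod_cast hK4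
    have hkr0 : (0 : ℝ) < kr := by linarith
    have hθpos : 0 < θ := by
      rw [hθval]
      exact pow_pos (div_pos (by linarith) hkr0) 2
    have hkey : θ * kr ^ 2 = (kr - 1) ^ 2 := by
      rw [hθval, div_pow]
      exact div_mul_cancel₀ _ (pow_ne_zero 2 hkr0.ne')
    have hm : (T.card : ℝ) = kr - 1 := by
      rw [hkrdef]
      have : (T.card : ℝ) + 1 = (K.card : ℝ) := by exact_mod_cast hKT
      linarith
    set m : ℝ := (T.card : ℝ) with hmdef
    have hm3 : (3 : ℝ) ≤ m := by rw [hmdef]; exact_mod_cast hT3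
    have hmθ : m * (1 - θ ^ 2) ≤ (1 + θ) ^ 2 := by
      rw [hm]
      exact thresh_ineq hkr4 hkey hθ0
    -- Cauchy–Schwarz
    have hCS : (a + b) ^ 2 ≤ m * s := by
      have h := sq_sum_le_card_mul_sum_sq (s := T) (f := fun q => vp q + vm q)
      have e5 : ∑ q ∈ T, (vp q + vm q) = a + b := by
        rw [hadef, hbdef, ← Finset.sum_add_distrib]
      have e6 : ∑ q ∈ T, (vp q + vm q) ^ 2 = s := by
        rw [hsdef]
        refine Finset.sum_congr rfl fun q _ => ?_
        calc (vp q + vm q) ^ 2 = (vp q - vm q) ^ 2 + 4 * (vp q * vm q) := by ring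
        _ = v q ^ 2 := by rw [hsub q, hmul0 q]; ring
      rw [e5, e6] at h
      exact_mod_cast h
    exact core_contra ha hb hs hμ hθpos hm3 hmθ hθab hθba hCS hE1

end helpers

/-- **Theorem 2 (matrix-algebraic content).**
If `λ > 1` is an eigenvalue of the composite coherence matrix
`C = F Πᵀ R̃ Π Fᵀ` with algebraic multiplicity one, then `λ` is an eigenvalue of exactly
one block `R⁽ⁱ⁾`, and every eigenvector `u` of `C` associated with `λ` has nonzero
subvector `u_p` exactly when `p ∈ K⁽ⁱ⁾`.

Here the composite space `ℝ^{nP}` is indexed by pairs `(p, i)` with `p` a data-set index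
and `i` a component index; `Matrix.blockDiagonal R` (indexed by `(p, i)`) is exactly
`Πᵀ R̃ Π` where `R̃ = blkdiag(R⁽¹⁾, …, R⁽ⁿ⁾)` is indexed in component-major order `(i, p)`
and `Π` is the permutation matrix of the swap `(p, i) ↦ (i, p)`; and
`(Matrix.blockDiagonal F).submatrix Prod.swap Prod.swap` (indexed by `(p, i)`) is the
block-diagonal matrix `F = blkdiag(F₁, …, F_P)`. -/
theorem eigenvector_support_eq_correlated_datasets
    (n P : ℕ) (hn : 1 ≤ n) (hP : 1 ≤ P)
    (R : Fin n → Matrix (Fin P) (Fin P) ℝ)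
    (K : Fin n → Finset (Fin P))
    (hsym : ∀ i, (R i).IsHermitian)
    (hdiag : ∀ i p, R i p p = 1)
    (hposK : ∀ i p q, p ≠ q → p ∈ K i → q ∈ K i → 0 < R i p q)
    (hzero : ∀ i p q, p ≠ q → (p ∉ K i ∨ q ∉ K i) → R i p q = 0)
    (hle : ∀ i p q, p ≠ q → R i p q ≤ 1)
    (hthr : ∀ i, 4 ≤ (K i).card → ∀ p q, p ≠ q → R i p q ≠ 0 →
      ((((K i).card : ℝ) - 1) / ((K i).card : ℝ)) ^ 2 < R i p q)
    (F : Fin P → Matrix (Fin n) (Fin n) ℝ)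
    (hF1 : ∀ p, F p * (F p)ᵀ = 1) (hF2 : ∀ p, (F p)ᵀ * F p = 1)
    (C : Matrix (Fin P × Fin n) (Fin P × Fin n) ℝ)
    (hCdef : C = ((Matrix.blockDiagonal F).submatrix Prod.swap Prod.swap)
        * Matrix.blockDiagonal R
        * ((Matrix.blockDiagonal F).submatrix Prod.swap Prod.swap)ᵀ)
    (lam : ℝ) (hlam : 1 < lam)
    (hmult : Polynomial.rootMultiplicity lam C.charpoly = 1) :
    ∃ i : Fin n,
      (∃ v : Fin P → ℝ, v ≠ 0 ∧ (R i).mulVec v = lam • v) ∧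
      (∀ j : Fin n, j ≠ i → ¬ ∃ v : Fin P → ℝ, v ≠ 0 ∧ (R j).mulVec v = lam • v) ∧
      (∀ u : Fin P × Fin n → ℝ, u ≠ 0 → C.mulVec u = lam • u →
        ∀ p : Fin P, (fun i' : Fin n => u (p, i')) ≠ 0 ↔ p ∈ K i) := by
  classical
  set G : Matrix (Fin P × Fin n) (Fin P × Fin n) ℝ :=
    (Matrix.blockDiagonal F).submatrix Prod.swap Prod.swap with hGdef
  have hswap : (Prod.swap : Fin P × Fin n → Fin n × Fin P)
      = ⇑(Equiv.prodComm (Fin P) (Fin n)) := rfl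
  have hGG : G * Gᵀ = 1 := by
    rw [hGdef, Matrix.transpose_submatrix, hswap, Matrix.submatrix_mul_equiv,
      Matrix.blockDiagonal_transpose, ← Matrix.blockDiagonal_mul,
      show (fun p => F p * (F p)ᵀ) = fun _ => (1 : Matrix (Fin n) (Fin n) ℝ) from funext hF1,
      show (fun _ : Fin P => (1 : Matrix (Fin n) (Fin n) ℝ)) = 1 from rfl,
      Matrix.blockDiagonal_one, Matrix.submatrix_one_equiv]
  have hGtG : Gᵀ * G = 1 := by
    rw [hGdef, Matrix.transpose_submatrix, hswap, Matrix.submatrix_mul_equiv,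
      Matrix.blockDiagonal_transpose, ← Matrix.blockDiagonal_mul,
      show (fun p => (F p)ᵀ * F p) = fun _ => (1 : Matrix (Fin n) (Fin n) ℝ) from funext hF2,
      show (fun _ : Fin P => (1 : Matrix (Fin n) (Fin n) ℝ)) = 1 from rfl,
      Matrix.blockDiagonal_one, Matrix.submatrix_one_equiv]
  have hCsim : C.charpoly = ∏ i, (R i).charpoly := by
    rw [hCdef, charpoly_similar G _ hGG hGtG, charpoly_blockDiagonal]
  -- lam is a root of some block
  have hroot : C.charpoly.IsRoot lam := by
    by_contra h
    rw [Polynomial.rootMultiplicity_eq_zero h] at hmult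
    exact one_ne_zero hmult.symm
  have hprodroot : ∃ i, (R i).charpoly.IsRoot lam := by
    have h := hroot
    rw [hCsim] at h
    rw [Polynomial.IsRoot, Polynomial.eval_prod] at h
    obtain ⟨i, _, hi⟩ := Finset.prod_eq_zero_iff.mp h
    exact ⟨i, hi⟩
  obtain ⟨i₀, hi₀⟩ := hprodroot
  obtain ⟨v, hv, heig⟩ := (root_iff_eigen (R i₀) lam).mp hi₀
  -- uniqueness of the block
  have huniq : ∀ j : Fin n, j ≠ i₀ → ¬ ∃ v : Fin P → ℝ, v ≠ 0 ∧ (R j).mulVec v = lam • v := by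
    rintro j hj ⟨w, hw, hew⟩
    have hrj : (R j).charpoly.IsRoot lam := (root_iff_eigen (R j) lam).mpr ⟨w, hw, hew⟩
    have hdvd : (Polynomial.X - Polynomial.C lam) ^ 2 ∣ C.charpoly := by
      rw [hCsim, sq]
      have hpair : (R i₀).charpoly * (R j).charpoly ∣ ∏ i, (R i).charpoly := by
        have hsub : (∏ x ∈ ({i₀, j} : Finset (Fin n)), (R x).charpoly) ∣
            ∏ i, (R i).charpoly :=
          Finset.prod_dvd_prod_of_subset _ _ (fun x => (R x).charpoly) (Finset.subset_univ _)
        rwa [Finset.prod_pair (Ne.symm hj)] at hsub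
      exact dvd_trans
        (mul_dvd_mul (Polynomial.dvd_iff_isRoot.mpr hi₀) (Polynomial.dvd_iff_isRoot.mpr hrj))
        hpair
    have h2 : 2 ≤ Polynomial.rootMultiplicity lam C.charpoly :=
      (Polynomial.le_rootMultiplicity_iff (Matrix.charpoly_monic C).ne_zero).mpr hdvd
    rw [hmult] at h2
    omega
  refine ⟨i₀, ⟨v, hv, heig⟩, huniq, ?_⟩
  intro u hu0 hCu p
  set w : Fin P × Fin n → ℝ := Gᵀ.mulVec u with hwdef
  have hDw : (Matrix.blockDiagonal R).mulVec w = lam • w := by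
    have h1 : Gᵀ * C = Matrix.blockDiagonal R * Gᵀ := by
      rw [hCdef, ← Matrix.mul_assoc, ← Matrix.mul_assoc, hGtG, Matrix.one_mul]
    calc (Matrix.blockDiagonal R).mulVec w
        = (Matrix.blockDiagonal R * Gᵀ).mulVec u := by rw [hwdef, Matrix.mulVec_mulVec]
    _ = (Gᵀ * C).mulVec u := by rw [h1]
    _ = Gᵀ.mulVec (C.mulVec u) := (Matrix.mulVec_mulVec _ _ _).symm
    _ = Gᵀ.mulVec (lam • u) := by rw [hCu]
    _ = lam • w := by rw [Matrix.mulVec_smul, hwdef]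
  have huGw : u = G.mulVec w := by
    rw [hwdef, Matrix.mulVec_mulVec, hGG, Matrix.one_mulVec]
  -- slices are eigenvectors of the blocks
  have hslice : ∀ j : Fin n, (R j).mulVec (fun q => w (q, j)) = lam • (fun q => w (q, j)) := by
    intro j
    funext q
    have hkey : (Matrix.blockDiagonal R).mulVec w (q, j) = ∑ r, R j q r * w (r, j) := by
      simp [Matrix.mulVec, dotProduct, Fintype.sum_prod_type, Matrix.blockDiagonal_apply,
        ite_mul, eq_comm]
    have := congrFun hDw (q, j)
    rw [hkey] at this
    simpa [Matrix.mulVec, dotProduct] using this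
  have hwj0 : ∀ j : Fin n, j ≠ i₀ → ∀ q, w (q, j) = 0 := by
    intro j hj q
    by_contra hq
    exact huniq j hj ⟨fun r => w (r, j), fun h0 => hq (congrFun h0 q), hslice j⟩
  set v' : Fin P → ℝ := fun q => w (q, i₀) with hv'def
  have hv' : v' ≠ 0 := by
    intro h0
    apply hu0
    have hw0 : w = 0 := by
      funext x
      rcases x with ⟨q, i⟩
      rcases eq_or_ne i i₀ with rfl | hne
      · exact congrFun h0 q
      · exact hwj0 i hne q
    rw [huGw, hw0, Matrix.mulVec_zero]
  have hsupp := support_eq_K (R i₀) (K i₀) (hdiag i₀) (hposK i₀) (hzero i₀) (hle i₀)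
    (hthr i₀) hlam hv' (hslice i₀)
  have hu_entry : ∀ q i', u (q, i') = F q i' i₀ * v' q := by
    intro q i'
    rw [huGw]
    have hkey : G.mulVec w (q, i') = ∑ j, F q i' j * w (q, j) := by
      rw [hGdef]
      simp [Matrix.mulVec, dotProduct, Fintype.sum_prod_type, Matrix.blockDiagonal_apply,
        Matrix.submatrix_apply, ite_mul, eq_comm]
    rw [hkey]
    rw [Finset.sum_eq_single_of_mem i₀ (Finset.mem_univ i₀)
      (fun j _ hj => by rw [hwj0 j hj q, mul_zero])]
  constructor
  · intro hne
    by_contra hp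
    apply hne
    funext i'
    have hvp0 : v' p = 0 := by
      by_contra h
      exact hp ((hsupp p).mp h)
    show u (p, i') = 0
    rw [hu_entry p i', hvp0, mul_zero]
  · intro hp h0
    have hvp : v' p ≠ 0 := (hsupp p).mpr hp
    have hcol : ∃ i', F p i' i₀ ≠ 0 := by
      by_contra hall
      push_neg at hall
      have h1 := congrFun (congrFun (hF2 p) i₀) i₀
      rw [Matrix.mul_apply] at h1
      simp only [Matrix.transpose_apply, hall, mul_zero, Finset.sum_const_zero] at h1
      simp [Matrix.one_apply] at h1
    obtain ⟨i', hi'⟩ := hcol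
    have := congrFun h0 i'
    simp only [Pi.zero_apply] at this
    rw [hu_entry p i'] at this
    exact mul_ne_zero hi' hvp this
end

section
/- Let P ≥ 1 and let R be a real symmetric positive semidefinite P×P matrix with all diagonal entries equal to 1 and all entries nonnegative. If P is an eigenvalue of R, then R is the all-ones matrix 𝟏𝟏ᵀ; in particular every off-diagonal entry of R equals 1. -/
/-!
Positive semidefiniteness with unit diagonal bounds every entry by `1`, via the quadratic form at
`eᵢ - eⱼ`. For an eigenvector `v` with eigenvalue `P`, look at a coordinate `i` where `|vᵢ|` is
maximal: `P |vᵢ| = |∑ⱼ Rᵢⱼ vⱼ| ≤ ∑ⱼ Rᵢⱼ |vⱼ| ≤ P |vᵢ|`, so every term is extremal, i.e. `Rᵢⱼ = 1`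
and `|vⱼ| = |vᵢ|` for all `j`. Then every coordinate is maximal, and every row consists of ones.
-/

open Matrix Finset

namespace Matrix

variable {n : Type*} [Fintype n]

theorem PosSemidef.two_mul_apply_le_add_diag [DecidableEq n] {A : Matrix n n ℝ}
    (hA : A.PosSemidef) (i j : n) : 2 * A i j ≤ A i i + A j j := by
  have hquad := hA.dotProduct_mulVec_nonneg (Pi.single i 1 - Pi.single j 1)
  have hsymm : A j i = A i j := by simpa using hA.isHermitian.apply i j
  simp only [star_trivial, sub_dotProduct, single_dotProduct, one_mul, mulVec_sub,
    Pi.sub_apply, mulVec_single_one, col_apply] at hquad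
  linarith

theorem apply_eq_one_and_abs_eq_of_mulVec_eq_card_smul {A : Matrix n n ℝ} {v : n → ℝ}
    (hA₀ : ∀ i j, 0 ≤ A i j) (hA₁ : ∀ i j, A i j ≤ 1)
    (hv : A *ᵥ v = (Fintype.card n : ℝ) • v) {i : n} (hvi : v i ≠ 0)
    (hmax : ∀ j, |v j| ≤ |v i|) (j : n) : A i j = 1 ∧ |v j| = |v i| := by
  have hterm : ∀ k, A i k * |v k| ≤ |v i| := fun k =>
    (mul_le_of_le_one_left (abs_nonneg _) (hA₁ i k)).trans (hmax k)
  have hsum : ∑ k, A i k * |v k| = ∑ _k : n, |v i| := by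
    refine le_antisymm (sum_le_sum fun k _ => hterm k) ?_
    calc ∑ _k : n, |v i| = |(A *ᵥ v) i| := by simp [hv, abs_mul]
      _ ≤ ∑ k, |A i k * v k| := abs_sum_le_sum_abs _ _
      _ = ∑ k, A i k * |v k| := by simp_rw [abs_mul, abs_of_nonneg (hA₀ i _)]
  have hj : A i j * |v j| = |v i| := (sum_eq_sum_iff_of_le fun k _ => hterm k).1 hsum j (mem_univ j)
  have hvj : |v j| = |v i| :=
    le_antisymm (hmax j) (hj ▸ mul_le_of_le_one_left (abs_nonneg _) (hA₁ i j))
  refine ⟨?_, hvj⟩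
  rw [hvj] at hj
  exact (mul_eq_right₀ (abs_ne_zero.2 hvi)).1 hj

theorem eq_all_ones_of_mulVec_eq_card_smul {A : Matrix n n ℝ} {v : n → ℝ}
    (hA₀ : ∀ i j, 0 ≤ A i j) (hA₁ : ∀ i j, A i j ≤ 1)
    (hv : A *ᵥ v = (Fintype.card n : ℝ) • v) (hv₀ : v ≠ 0) :
    A = of fun _ _ => 1 := by
  obtain ⟨j, hvj⟩ := Function.ne_iff.1 hv₀
  have : Nonempty n := ⟨j⟩
  obtain ⟨i, hmax⟩ := Finite.exists_max fun k => |v k|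
  have hvi : v i ≠ 0 := abs_pos.1 ((abs_pos.2 hvj).trans_le (hmax j))
  have habs : ∀ k, |v k| = |v i| := fun k =>
    (apply_eq_one_and_abs_eq_of_mulVec_eq_card_smul hA₀ hA₁ hv hvi hmax k).2
  ext k l
  refine (apply_eq_one_and_abs_eq_of_mulVec_eq_card_smul hA₀ hA₁ hv (i := k) ?_ ?_ l).1
  · exact abs_ne_zero.1 (habs k ▸ abs_ne_zero.2 hvi)
  · exact fun l => (habs l).trans (habs k).symm |>.le

end Matrix

theorem eigenvalue_P_implies_all_ones_general
    (P : ℕ)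
    (R : Matrix (Fin P) (Fin P) ℝ)
    (hpsd : R.PosSemidef)
    (hdiag : ∀ p, R p p = 1)
    (hnonneg : ∀ p q, 0 ≤ R p q)
    (heig : ∃ v : Fin P → ℝ, v ≠ 0 ∧ R.mulVec v = (P : ℝ) • v) :
    R = Matrix.of (fun _ _ => (1 : ℝ)) := by
  obtain ⟨v, hv₀, hv⟩ := heig
  have hle_one : ∀ p q, R p q ≤ 1 := fun p q => by
    linarith [hpsd.two_mul_apply_le_add_diag p q, hdiag p, hdiag q]
  refine eq_all_ones_of_mulVec_eq_card_smul hnonneg hle_one ?_ hv₀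
  rwa [Fintype.card_fin]

/-- **Corollary 1 (matrix-algebraic content).**
A real symmetric positive semidefinite `P×P` matrix with unit diagonal and nonnegative
entries that has `P` as an eigenvalue must be the all-ones matrix `𝟏𝟏ᵀ`; in particular
every off-diagonal entry equals `1`. -/
theorem eigenvalue_P_implies_all_ones
    (P : ℕ) (hP : 1 ≤ P)
    (R : Matrix (Fin P) (Fin P) ℝ)
    (hpsd : R.PosSemidef)
    (hdiag : ∀ p, R p p = 1)
    (hnonneg : ∀ p q, 0 ≤ R p q)
    (heig : ∃ v : Fin P → ℝ, v ≠ 0 ∧ R.mulVec v = (P : ℝ) • v) :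
    R = Matrix.of (fun _ _ => (1 : ℝ)) :=
  eigenvalue_P_implies_all_ones_general P R hpsd hdiag hnonneg heig
end

section
/- Let k ≥ 2 be an integer and set ε = ((k−1)/k)². If H ∈ ℝ^{k×k} is a symmetric matrix with all diagonal entries zero and every off-diagonal entry in the interval (ε, 1], then H has exactly one strictly positive eigenvalue: its largest eigenvalue is strictly positive and the remaining k−1 eigenvalues, counted with multiplicity, are all ≤ 0. -/
/-!
The matrix `H + 1` has all entries in `[ε, 1]`; bounding each term `(H + 1) p q * x p * x q` by
its value at the extreme entry `1` or `ε` (according to the sign of `x p * x q`) gives, for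
`∑ x p = 0`, `xᵀ H x ≤ (1 - ε) (∑ |x p|)² / 2 - ‖x‖² ≤ ((1 - ε) k / 2 - 1) ‖x‖² ≤ 0`, the last
steps by Cauchy–Schwarz.
A quadratic form that is nonpositive on a hyperplane has at most one positive eigenvalue, since
two of them would span a plane meeting the hyperplane nontrivially. As `H ≠ 0` has trace zero,
some eigenvalue is positive.
-/

open Matrix Finset

-- The right-hand side is `max t (ε * t)`, written linearly in `t` and `|t|`.
lemma mul_le_of_mem_Icc {ε h : ℝ} (t : ℝ) (hε : ε ≤ h) (h1 : h ≤ 1) :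
    h * t ≤ ((1 + ε) * t + (1 - ε) * |t|) / 2 := by
  rcases le_total 0 t with ht | ht
  · rw [abs_of_nonneg ht]; nlinarith
  · rw [abs_of_nonpos ht]; nlinarith

section QuadraticForm

variable {n : Type*} [Fintype n]

lemma dotProduct_mulVec_eq_sum_sum (M : Matrix n n ℝ) (x : n → ℝ) :
    x ⬝ᵥ M *ᵥ x = ∑ p, ∑ q, M p q * (x p * x q) := by
  simp only [dotProduct, mulVec, mul_sum]
  exact sum_congr rfl fun p _ => sum_congr rfl fun q _ => by ring

lemma dotProduct_mulVec_le_of_mem_Icc {ε : ℝ} {M : Matrix n n ℝ}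
    (hlb : ∀ p q, ε ≤ M p q) (hub : ∀ p q, M p q ≤ 1) (x : n → ℝ) :
    x ⬝ᵥ M *ᵥ x ≤ ((1 + ε) * (∑ p, x p) ^ 2 + (1 - ε) * (∑ p, |x p|) ^ 2) / 2 := by
  rw [dotProduct_mulVec_eq_sum_sum, sq, sq, sum_mul_sum, sum_mul_sum,
    mul_sum, mul_sum, ← sum_add_distrib, sum_div]
  refine sum_le_sum fun p _ => ?_
  rw [mul_sum, mul_sum, ← sum_add_distrib, sum_div]
  refine sum_le_sum fun q _ => ?_
  rw [← abs_mul]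
  exact mul_le_of_mem_Icc _ (hlb p q) (hub p q)

lemma sq_sum_abs_le_card_mul_dotProduct (x : n → ℝ) :
    (∑ p, |x p|) ^ 2 ≤ Fintype.card n * (x ⬝ᵥ x) := by
  simpa [dotProduct, sq_abs, sq] using sq_sum_le_card_mul_sum_sq (s := univ) (f := fun p => |x p|)

lemma dotProduct_mulVec_le_of_hollow [DecidableEq n] {ε : ℝ} (hε : ε ≤ 1) {H : Matrix n n ℝ}
    (hdiag : ∀ p, H p p = 0) (hlb : ∀ p q, p ≠ q → ε ≤ H p q)
    (hub : ∀ p q, p ≠ q → H p q ≤ 1) {x : n → ℝ} (hx : ∑ p, x p = 0) :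
    x ⬝ᵥ H *ᵥ x ≤ ((1 - ε) * Fintype.card n / 2 - 1) * (x ⬝ᵥ x) := by
  have hM := dotProduct_mulVec_le_of_mem_Icc (M := H + 1) (ε := ε)
    (fun p q => by rcases eq_or_ne p q with rfl | h <;> simp [*])
    (fun p q => by rcases eq_or_ne p q with rfl | h <;> simp [*]) x
  rw [add_mulVec, one_mulVec, dotProduct_add, hx] at hM
  nlinarith [sq_sum_abs_le_card_mul_dotProduct x]

end QuadraticForm

namespace Matrix.IsHermitian

variable {n : Type*} [Fintype n] [DecidableEq n]

lemma exists_eigenvalues_pos_of_trace_eq_zero {𝕜 : Type*} [RCLike 𝕜] {A : Matrix n n 𝕜}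
    (hA : A.IsHermitian) (htr : A.trace = 0) (hne : A ≠ 0) : ∃ i, 0 < hA.eigenvalues i := by
  by_contra! hnonpos
  have hsum : ∑ i, hA.eigenvalues i = 0 := by
    exact_mod_cast hA.trace_eq_sum_eigenvalues.symm.trans htr
  have hzero : hA.eigenvalues = 0 :=
    funext fun i => (sum_eq_zero_iff_of_nonpos fun i _ => hnonpos i).1 hsum i (mem_univ i)
  exact hne (hA.eigenvalues_eq_zero_iff.1 hzero)

lemma dotProduct_eigenvectorBasis {A : Matrix n n ℝ} (hA : A.IsHermitian) (i j : n) :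
    (hA.eigenvectorBasis i).ofLp ⬝ᵥ (hA.eigenvectorBasis j).ofLp = if i = j then 1 else 0 := by
  simpa [EuclideanSpace.inner_eq_star_dotProduct, dotProduct_comm] using
    orthonormal_iff_ite.1 hA.eigenvectorBasis.orthonormal i j

lemma card_eigenvalues_pos_le_one {A : Matrix n n ℝ} (hA : A.IsHermitian) (v : n → ℝ)
    (hv : ∀ x, v ⬝ᵥ x = 0 → x ⬝ᵥ A *ᵥ x ≤ 0) : #{i | 0 < hA.eigenvalues i} ≤ 1 := by
  refine card_le_one.2 fun i hi j hj => ?_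
  simp only [mem_filter, mem_univ, true_and] at hi hj
  by_contra hij
  set u := fun l => (hA.eigenvectorBasis l).ofLp
  obtain ⟨a, b, hab, hv0⟩ : ∃ a b : ℝ, (a ≠ 0 ∨ b ≠ 0) ∧ a * (v ⬝ᵥ u i) + b * (v ⬝ᵥ u j) = 0 := by
    by_cases h : v ⬝ᵥ u j = 0
    · exact ⟨0, 1, Or.inr one_ne_zero, by simp [h]⟩
    · exact ⟨v ⬝ᵥ u j, -(v ⬝ᵥ u i), Or.inl h, by ring⟩
  have hform : (a • u i + b • u j) ⬝ᵥ A *ᵥ (a • u i + b • u j)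
      = a ^ 2 * hA.eigenvalues i + b ^ 2 * hA.eigenvalues j := by
    simp only [u, mulVec_add, mulVec_smul, hA.mulVec_eigenvectorBasis, add_dotProduct,
      dotProduct_add, smul_dotProduct, dotProduct_smul, dotProduct_eigenvectorBasis, hij,
      Ne.symm hij, ↓reduceIte, smul_eq_mul, mul_one, mul_zero, add_zero, zero_add]
    ring
  have hpos : 0 < a ^ 2 * hA.eigenvalues i + b ^ 2 * hA.eigenvalues j := by
    rcases hab with ha | hb <;> positivity
  have := hv (a • u i + b • u j) (by simp [dotProduct_add, dotProduct_smul, hv0])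
  linarith

end Matrix.IsHermitian

/-- **Appendix Corollary.**
Let `ε = ((k−1)/k)²`. A hollow (zero-diagonal) symmetric real `k×k` matrix (`k ≥ 2`)
with off-diagonal entries in `(ε, 1]` has exactly one strictly positive eigenvalue:
its largest eigenvalue is positive and the other `k−1` eigenvalues (with multiplicity)
are `≤ 0`. -/
theorem hollow_symmetric_one_positive_eigenvalue
    (k : ℕ) (hk : 2 ≤ k)
    (H : Matrix (Fin k) (Fin k) ℝ)
    (hH : H.IsHermitian)
    (hdiag : ∀ p, H p p = 0)
    (hlb : ∀ p q, p ≠ q → (((k : ℝ) - 1) / (k : ℝ)) ^ 2 < H p q)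
    (hub : ∀ p q, p ≠ q → H p q ≤ 1) :
    (∃ j₀, (∀ j, hH.eigenvalues j ≤ hH.eigenvalues j₀) ∧ 0 < hH.eigenvalues j₀) ∧
      (Finset.univ.filter fun j => 0 < hH.eigenvalues j).card = 1 := by
  set ε := (((k : ℝ) - 1) / (k : ℝ)) ^ 2 with hε
  have hk2 : (2 : ℝ) ≤ k := by exact_mod_cast hk
  have hε1 : ε ≤ 1 := by
    rw [hε, div_pow, div_le_one (by positivity)]
    nlinarith
  -- `(1 - ε) * k = (2k - 1) / k < 2`
  have hcoeff : (1 - ε) * k / 2 - 1 ≤ 0 := by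
    rw [hε]; field_simp; nlinarith
  have hform : ∀ x : Fin k → ℝ, 1 ⬝ᵥ x = 0 → x ⬝ᵥ H *ᵥ x ≤ 0 := fun x hx => by
    have := dotProduct_mulVec_le_of_hollow hε1 hdiag (fun p q h => (hlb p q h).le) hub
      (by simpa [one_dotProduct] using hx)
    rw [Fintype.card_fin] at this
    exact this.trans (mul_nonpos_of_nonpos_of_nonneg hcoeff (dotProduct_self_star_nonneg x))
  have hne : H ≠ 0 := fun h0 => by
    have := hlb ⟨0, by omega⟩ ⟨1, by omega⟩ (by simp [Fin.ext_iff])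
    rw [h0] at this
    exact (sq_nonneg _).not_gt this
  obtain ⟨i, hi⟩ := hH.exists_eigenvalues_pos_of_trace_eq_zero (by simp [trace, hdiag]) hne
  obtain ⟨j₀, -, hmax⟩ := exists_max_image univ hH.eigenvalues ⟨i, mem_univ i⟩
  have hj₀ : 0 < hH.eigenvalues j₀ := hi.trans_le (hmax i (mem_univ i))
  refine ⟨⟨j₀, fun j => hmax j (mem_univ j), hj₀⟩, ?_⟩
  exact (hH.card_eigenvalues_pos_le_one 1 hform).antisymm
    (card_pos.2 ⟨j₀, mem_filter.2 ⟨mem_univ j₀, hj₀⟩⟩)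
end

section
/- Let a, b, c > 0 be real numbers and let H be the 3×3 real symmetric matrix with zero diagonal and off-diagonal entries H₁₂ = H₂₁ = a, H₁₃ = H₃₁ = b, H₂₃ = H₃₂ = c. Then H has exactly one strictly positive eigenvalue, counted with multiplicity: exactly one of its three eigenvalues is > 0 and the other two are ≤ 0. -/
/-!
The trace of `H` is `0` and its determinant is `2abc > 0`, and for a real symmetric matrix these
are the sum and the product of the eigenvalues. Three reals with zero sum and positive product
consist of one positive and two negative numbers: the product forces an even number of negative
factors, and the sum rules out none.
-/

open Matrix Finset

lemma one_pos_two_neg_of_add_eq_zero_of_mul_pos {x y z : ℝ} (hsum : x + y + z = 0)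
    (hprod : 0 < x * y * z) :
    (0 < x ∧ y < 0 ∧ z < 0) ∨ (x < 0 ∧ 0 < y ∧ z < 0) ∨ (x < 0 ∧ y < 0 ∧ 0 < z) := by
  rcases pos_and_pos_or_neg_and_neg_of_mul_pos hprod with ⟨hxy, hz⟩ | ⟨hxy, hz⟩
  · rcases pos_and_pos_or_neg_and_neg_of_mul_pos hxy with ⟨hx, hy⟩ | ⟨hx, hy⟩
    · linarith
    · exact .inr (.inr ⟨hx, hy, hz⟩)
  · rcases mul_neg_iff.1 hxy with ⟨hx, hy⟩ | ⟨hx, hy⟩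
    · exact .inl ⟨hx, hy, hz⟩
    · exact .inr (.inl ⟨hx, hy, hz⟩)

lemma exists_pos_forall_ne_neg_of_sum_eq_zero_of_prod_pos (f : Fin 3 → ℝ) (hsum : ∑ i, f i = 0)
    (hprod : 0 < ∏ i, f i) : ∃ i, 0 < f i ∧ ∀ j ≠ i, f j < 0 := by
  rw [Fin.sum_univ_three] at hsum
  rw [Fin.prod_univ_three] at hprod
  rcases one_pos_two_neg_of_add_eq_zero_of_mul_pos hsum hprod with
    ⟨h0, h1, h2⟩ | ⟨h0, h1, h2⟩ | ⟨h0, h1, h2⟩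
  · exact ⟨0, h0, by simp [Fin.forall_fin_succ, h1, h2]⟩
  · exact ⟨1, h1, by simp [Fin.forall_fin_succ, h0, h2]⟩
  · exact ⟨2, h2, by simp [Fin.forall_fin_succ, h0, h1]⟩

lemma card_filter_pos_eq_one_and_card_filter_nonpos {ι : Type*} [Fintype ι] [DecidableEq ι]
    {f : ι → ℝ} {i : ι} (hi : 0 < f i) (hne : ∀ j ≠ i, f j < 0) :
    #{j | 0 < f j} = 1 ∧ #{j | f j ≤ 0} = Fintype.card ι - 1 := by
  have hpos : ({j | 0 < f j} : Finset ι) = {i} := by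
    ext j
    by_cases hj : j = i
    · simp [hj, hi]
    · simp [hj, (hne j hj).not_gt]
  have hnonpos : ({j | f j ≤ 0} : Finset ι) = univ.erase i := by
    ext j
    by_cases hj : j = i
    · simp [hj, hi]
    · simp [hj, (hne j hj).le]
  rw [hpos, hnonpos, card_singleton, card_erase_of_mem (mem_univ i), card_univ]
  exact ⟨rfl, rfl⟩

lemma Matrix.IsHermitian.card_eigenvalues_pos_eq_one_of_trace_eq_zero_of_det_pos
    {A : Matrix (Fin 3) (Fin 3) ℝ} (hA : A.IsHermitian) (htrace : A.trace = 0) (hdet : 0 < A.det) :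
    #{i | 0 < hA.eigenvalues i} = 1 ∧ #{i | hA.eigenvalues i ≤ 0} = 2 := by
  obtain ⟨i, hi, hne⟩ := exists_pos_forall_ne_neg_of_sum_eq_zero_of_prod_pos hA.eigenvalues
    (by simpa [hA.trace_eq_sum_eigenvalues] using htrace)
    (by simpa [hA.det_eq_prod_eigenvalues] using hdet)
  exact card_filter_pos_eq_one_and_card_filter_nonpos hi hne

/-- **Case 2 (`k⁽ⁱ⁾ = 3`) in the proof of Theorem 1.**
The 3×3 hollow symmetric matrix with positive off-diagonal entries `a, b, c` has exactly
one strictly positive eigenvalue (counted with multiplicity); the other two are `≤ 0`. -/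
theorem hollow_symmetric_3x3_one_positive_eigenvalue
    (a b c : ℝ) (ha : 0 < a) (hb : 0 < b) (hc : 0 < c)
    (H : Matrix (Fin 3) (Fin 3) ℝ)
    (hHdef : H = !![0, a, b; a, 0, c; b, c, 0])
    (hH : H.IsHermitian) :
    (Finset.univ.filter fun j => 0 < hH.eigenvalues j).card = 1 ∧
      (Finset.univ.filter fun j => hH.eigenvalues j ≤ 0).card = 2 := by
  have htrace : H.trace = 0 := by
    simp [hHdef, trace_fin_three]
  have hdet : H.det = 2 * a * b * c := by
    simp only [hHdef, det_fin_three, Fin.isValue, of_apply, cons_val', cons_val_zero,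
      cons_val_fin_one, cons_val_one, mul_zero, Matrix.cons_val, zero_mul, sub_self, zero_add,
      sub_zero]
    ring
  exact hH.card_eigenvalues_pos_eq_one_of_trace_eq_zero_of_det_pos htrace
    (hdet ▸ by positivity)
end
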